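/- arXiv:0708.4094 — 2 statements merged into one kernel-verified Lean document; each statement's English description precedes it below -/
import Mathlib

section
/- For any unit vectors φ, ψ ∈ L²(ℝ), all p ∈ ℝ and almost all q ∈ ℝ: √2·(1/√(2π))·⟨W(√2 q, √2 p)Cψ, φ⟩ = F[[B(φ⊗ψ)](q,·)](p), where B is the 50-50 beam splitter unitary on L²(ℝ²). -/
open MeasureTheory

/-- The Weyl operator `W(q,p) = e^{iqp/2} e^{−iqP} e^{ipQ}` acting on functions:
`(W(q,p)ψ)(x) = e^{iqp/2} e^{ip(x−q)} ψ(x−q)`. -/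
noncomputable def weylOp (q p : ℝ) (ψ : ℝ → ℂ) : ℝ → ℂ := fun x =>
  Complex.exp (Complex.I * q * p / 2) * Complex.exp (Complex.I * p * (x - q)) * ψ (x - q)

/-- The antiunitary conjugation `C`. -/
noncomputable def conjFun (ψ : ℝ → ℂ) : ℝ → ℂ := fun x => (starRingEnd ℂ) (ψ x)

/-- The `L²` inner product, antilinear in the first argument. -/
noncomputable def innerL2 (f g : ℝ → ℂ) : ℂ := ∫ x : ℝ, (starRingEnd ℂ) (f x) * g x

/-- The Fourier(–Plancherel) transform on `L¹ ∩ L²` functions: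
`(Fφ)(y) = (1/√(2π)) ∫ e^{−iyx} φ(x) dx`. -/
noncomputable def fourierPl (f : ℝ → ℂ) (p : ℝ) : ℂ :=
  (Real.sqrt (2 * Real.pi) : ℂ)⁻¹ * ∫ x : ℝ, Complex.exp (-(Complex.I * p * x)) * f x

/-!
Both sides are the same integral: substituting `y = √2 x - q` in the Fourier integral of the
beam-splitter output turns `φ((q+y)/√2) ψ((-q+y)/√2)` into `φ x ψ(x - √2 q)`, the Fourier phase
into the phase of `W(√2 q, √2 p)`, and the Jacobian `1/√2` cancels the prefactor `√2`.
-/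

theorem integral_comp_mul_left_sub {E : Type*} [NormedAddCommGroup E] [NormedSpace ℝ E]
    (g : ℝ → E) (a q : ℝ) : ∫ x, g (a * x - q) = |a⁻¹| • ∫ y, g y := by
  rw [Measure.integral_comp_mul_left (fun t => g (t - q)) a, integral_sub_right_eq_self g q]

theorem starRingEnd_weylOp_conjFun (a b x : ℝ) (ψ : ℝ → ℂ) :
    starRingEnd ℂ (weylOp a b (conjFun ψ) x)
      = Complex.exp (-(Complex.I * b * (x - a / 2))) * ψ (x - a) := by
  simp only [weylOp, conjFun, map_mul, Complex.conj_conj, ← Complex.exp_conj, map_div₀,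
    map_ofNat, Complex.conj_I, Complex.conj_ofReal, map_sub]
  rw [← Complex.exp_add]
  congr 2
  ring

theorem weyl_inner_eq_fourier_beamSplitter_general (φ ψ : ℝ → ℂ) (p : ℝ) :
    ∀ᵐ q : ℝ,
      (Real.sqrt 2 : ℂ) * (Real.sqrt (2 * Real.pi) : ℂ)⁻¹ *
          innerL2 (weylOp (Real.sqrt 2 * q) (Real.sqrt 2 * p) (conjFun ψ)) φ
        = fourierPl
            (fun y => φ ((q + y) / Real.sqrt 2) * ψ ((-q + y) / Real.sqrt 2)) p := by
  refine Filter.Eventually.of_forall fun q => ?_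
  have hs : Real.sqrt 2 * Real.sqrt 2 = 2 := Real.mul_self_sqrt zero_le_two
  have hs0 : 0 < Real.sqrt 2 := by positivity
  set g : ℝ → ℂ := fun y => Complex.exp (-(Complex.I * p * y)) *
    (φ ((q + y) / Real.sqrt 2) * ψ ((-q + y) / Real.sqrt 2))
  have integrand_eq (x : ℝ) :
      starRingEnd ℂ (weylOp (Real.sqrt 2 * q) (Real.sqrt 2 * p) (conjFun ψ) x) * φ x
        = g (Real.sqrt 2 * x - q) := by
    have harg₁ : (q + (Real.sqrt 2 * x - q)) / Real.sqrt 2 = x := by field_simp; ring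
    have harg₂ : (-q + (Real.sqrt 2 * x - q)) / Real.sqrt 2 = x - Real.sqrt 2 * q := by
      field_simp; linear_combination q * hs
    have hphase : Complex.I * (Real.sqrt 2 * p : ℝ) * (x - (Real.sqrt 2 * q : ℝ) / 2)
        = Complex.I * p * (Real.sqrt 2 * x - q : ℝ) := by
      have hsC : (Real.sqrt 2 : ℂ) * Real.sqrt 2 = 2 := by exact_mod_cast hs
      push_cast; linear_combination (-Complex.I * p * q / 2) * hsC
    rw [starRingEnd_weylOp_conjFun, hphase]
    simp only [g, harg₁, harg₂]
    ring
  calc (Real.sqrt 2 : ℂ) * (Real.sqrt (2 * Real.pi) : ℂ)⁻¹ *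
          innerL2 (weylOp (Real.sqrt 2 * q) (Real.sqrt 2 * p) (conjFun ψ)) φ
      = (Real.sqrt 2 : ℂ) * (Real.sqrt (2 * Real.pi) : ℂ)⁻¹ *
          ∫ x, g (Real.sqrt 2 * x - q) := by simp only [innerL2, integrand_eq]
    _ = (Real.sqrt (2 * Real.pi) : ℂ)⁻¹ * ∫ y, g y := by
      rw [integral_comp_mul_left_sub, abs_of_pos (inv_pos.2 hs0), Complex.real_smul]
      push_cast
      field_simp
    _ = fourierPl _ p := rfl

/-- For unit vectors `φ, ψ ∈ L²(ℝ)`, all `p ∈ ℝ` and almost all `q ∈ ℝ`: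
`√2·(1/√(2π))·⟨W(√2 q, √2 p)Cψ, φ⟩ = F[[B(φ⊗ψ)](q,·)](p)`, where
`[B(φ⊗ψ)](q,y) = φ((q+y)/√2)·ψ((−q+y)/√2)` is the beam splitter applied to `φ⊗ψ`. -/
theorem weyl_inner_eq_fourier_beamSplitter (φ ψ : ℝ → ℂ)
    (hφ : MemLp φ 2 (volume : Measure ℝ)) (hφ1 : eLpNorm φ 2 (volume : Measure ℝ) = 1)
    (hψ : MemLp ψ 2 (volume : Measure ℝ)) (hψ1 : eLpNorm ψ 2 (volume : Measure ℝ) = 1)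
    (p : ℝ) :
    ∀ᵐ q : ℝ,
      (Real.sqrt 2 : ℂ) * (Real.sqrt (2 * Real.pi) : ℂ)⁻¹ *
          innerL2 (weylOp (Real.sqrt 2 * q) (Real.sqrt 2 * p) (conjFun ψ)) φ
        = fourierPl
            (fun y => φ ((q + y) / Real.sqrt 2) * ψ ((-q + y) / Real.sqrt 2)) p :=
  weyl_inner_eq_fourier_beamSplitter_general φ ψ p
end

section
/- Let Eⁿ : Borel(Ω) → L(H) be semispectral measures (normalized POVMs) on a metric space Ω, and E another semispectral measure. If for every state T on H the probability measures Z ↦ Tr[T Eⁿ(Z)] converge weakly to Z ↦ Tr[T E(Z)], then Eⁿ(X) → E(X) in the weak operator topology for every Borel set X with E(∂X) = 0. -/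
/-!
Testing against the pure state `rankOne ℂ u u` of a unit vector `u` turns the trace measures into
`Z ↦ ⟪u, Eⁿ(Z) u⟫` and `Z ↦ ⟪u, E(Z) u⟫`, and `E(∂X) = 0` says that `X` is a continuity set of the
limit, so the portmanteau theorem gives `⟪u, Eⁿ(X) u⟫ → ⟪u, E(X) u⟫`. Scaling extends this to all
vectors, and polarization to all matrix coefficients `⟪φ, Eⁿ(X) ψ⟫`.
-/

open MeasureTheory Filter
open scoped ComplexInnerProductSpace
open InnerProductSpace (rankOne)

section Portmanteau

variable {Ω ι : Type*} [PseudoEMetricSpace Ω] [MeasurableSpace Ω] [OpensMeasurableSpace Ω]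

theorem tendsto_measure_of_forall_integral_tendsto {L : Filter ι} {μs : ι → Measure Ω}
    {μ : Measure Ω} [∀ i, IsProbabilityMeasure (μs i)] [IsProbabilityMeasure μ]
    (h : ∀ f : Ω → ℝ, Continuous f → (∃ M, ∀ x, |f x| ≤ M) →
      Tendsto (fun i => ∫ x, f x ∂(μs i)) L (nhds (∫ x, f x ∂μ)))
    {X : Set Ω} (hX : μ (frontier X) = 0) :
    Tendsto (fun i => μs i X) L (nhds (μ X)) := by
  let P : ProbabilityMeasure Ω := ⟨μ, inferInstance⟩
  let Ps : ι → ProbabilityMeasure Ω := fun i => ⟨μs i, inferInstance⟩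
  have hP : Tendsto Ps L (nhds P) :=
    ProbabilityMeasure.tendsto_iff_forall_integral_tendsto.mpr fun f =>
      h f f.continuous ⟨‖f‖, f.norm_coe_le_norm⟩
  exact ProbabilityMeasure.tendsto_measure_of_null_frontier_of_tendsto' hP hX

end Portmanteau

section InnerProduct

variable {𝕜 E ι : Type*} [RCLike 𝕜] [NormedAddCommGroup E] [InnerProductSpace 𝕜 E]

theorem HilbertBasis.tsum_inner_rankOne_self_apply [CompleteSpace E] (b : HilbertBasis ι 𝕜 E)
    (u : E) (A : E →L[𝕜] E) :
    ∑' i, inner 𝕜 (b i) (rankOne 𝕜 u u (A (b i))) = inner 𝕜 u (A u) := by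
  have h : ∀ i, inner 𝕜 (b i) (rankOne 𝕜 u u (A (b i))) =
      inner 𝕜 (A.adjoint u) (b i) * inner 𝕜 (b i) u := fun i => by
    rw [InnerProductSpace.rankOne_apply, inner_smul_right, A.adjoint_inner_left, mul_comm]
  simp_rw [h, b.tsum_inner_mul_inner, A.adjoint_inner_left]

theorem ContinuousLinearMap.tendsto_inner_self_of_tendsto_ofReal_re {L : Filter ι}
    {A : ι → E →L[𝕜] E} {B : E →L[𝕜] E} (hA : ∀ i, (A i).IsPositive) (hB : B.IsPositive)
    (x : E) (h : Tendsto (fun i => ENNReal.ofReal (RCLike.re (inner 𝕜 x (A i x)))) L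
      (nhds (ENNReal.ofReal (RCLike.re (inner 𝕜 x (B x)))))) :
    Tendsto (fun i => inner 𝕜 x (A i x)) L (nhds (inner 𝕜 x (B x))) := by
  have hreal : ∀ T : E →L[𝕜] E, T.IsPositive →
      (RCLike.re (inner 𝕜 x (T x)) : 𝕜) = inner 𝕜 x (T x) := fun T hT => by
    rw [← hT.inner_left_eq_inner_right]
    exact hT.isSymmetric.coe_re_inner_apply_self x
  have hre : Tendsto (fun i => RCLike.re (inner 𝕜 x (A i x))) L
      (nhds (RCLike.re (inner 𝕜 x (B x)))) := by
    simpa only [Function.comp_def, ENNReal.toReal_ofReal (hB.re_inner_nonneg_right x),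
      fun i => ENNReal.toReal_ofReal ((hA i).re_inner_nonneg_right x)]
      using (ENNReal.tendsto_toReal ENNReal.ofReal_ne_top).comp h
  rw [← hreal B hB]
  simpa only [Function.comp_def, hreal _ (hA _)] using
    ((RCLike.continuous_ofReal (K := 𝕜)).tendsto _).comp hre

theorem tendsto_inner_self_of_forall_norm_eq_one {L : Filter ι} {A : ι → E →L[𝕜] E}
    {B : E →L[𝕜] E}
    (h : ∀ u : E, ‖u‖ = 1 → Tendsto (fun i => inner 𝕜 u (A i u)) L (nhds (inner 𝕜 u (B u))))
    (z : E) : Tendsto (fun i => inner 𝕜 z (A i z)) L (nhds (inner 𝕜 z (B z))) := by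
  rcases eq_or_ne z 0 with rfl | hz0
  · simpa using tendsto_const_nhds
  set u := (‖z‖⁻¹ : 𝕜) • z
  have hz : z = ((‖z‖ : ℝ) : 𝕜) • u := by
    rw [smul_inv_smul₀ (by simpa using hz0)]
  have hscale : ∀ T : E →L[𝕜] E, inner 𝕜 z (T z) = (‖z‖ ^ 2 : 𝕜) * inner 𝕜 u (T u) :=
    fun T => by
      conv_lhs => rw [hz, map_smul, inner_smul_real_left, inner_smul_right]
      rw [RCLike.real_smul_eq_coe_mul]
      ring
  simp only [hscale]
  exact (h u (norm_smul_inv_norm hz0)).const_mul _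

end InnerProduct

theorem tendsto_inner_of_forall_tendsto_inner_self {V ι : Type*} [NormedAddCommGroup V]
    [InnerProductSpace ℂ V] {L : Filter ι} {A : ι → V →L[ℂ] V} {B : V →L[ℂ] V}
    (h : ∀ z : V, Tendsto (fun i => ⟪z, A i z⟫) L (nhds ⟪z, B z⟫)) (x y : V) :
    Tendsto (fun i => ⟪x, A i y⟫) L (nhds ⟪x, B y⟫) := by
  have hq : ∀ z : V, Tendsto (fun i => ⟪A i z, z⟫) L (nhds ⟪B z, z⟫) := fun z => by
    simpa only [Function.comp_def, inner_conj_symm] using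
      (Complex.continuous_conj.tendsto _).comp (h z)
  have hpol : ∀ T : V →L[ℂ] V, ⟪T y, x⟫ =
      (⟪T (x + y), x + y⟫ - ⟪T (x - y), x - y⟫ +
        Complex.I * ⟪T (x + Complex.I • y), x + Complex.I • y⟫ -
        Complex.I * ⟪T (x - Complex.I • y), x - Complex.I • y⟫) / 4 :=
    fun T => inner_map_polarization T.toLinearMap x y
  have hlim : Tendsto (fun i => ⟪A i y, x⟫) L (nhds ⟪B y, x⟫) := by
    simp only [hpol]
    exact ((((hq _).sub (hq _)).add ((hq _).const_mul _)).sub ((hq _).const_mul _)).div_const _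
  simpa only [Function.comp_def, inner_conj_symm] using
    (Complex.continuous_conj.tendsto _).comp hlim

theorem semispectral_weak_convergence_general
    {Ω : Type*} [MetricSpace Ω] [MeasurableSpace Ω] [BorelSpace Ω]
    {H : Type*} [NormedAddCommGroup H] [InnerProductSpace ℂ H] [CompleteSpace H]
    {ι : Type*} (e : HilbertBasis ι ℂ H)
    (En : ℕ → Set Ω → (H →L[ℂ] H)) (E : Set Ω → (H →L[ℂ] H))
    (hEnpos : ∀ n (Z : Set Ω), MeasurableSet Z → (En n Z).IsPositive)
    (hEpos : ∀ Z : Set Ω, MeasurableSet Z → (E Z).IsPositive)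
    (hEnuniv : ∀ n, En n Set.univ = 1) (hEuniv : E Set.univ = 1)
    (μn : (H →L[ℂ] H) → ℕ → Measure Ω) (μ : (H →L[ℂ] H) → Measure Ω)
    (hμn : ∀ (T : H →L[ℂ] H) (n : ℕ) (Z : Set Ω), MeasurableSet Z →
      μn T n Z = ENNReal.ofReal (∑' i : ι, ⟪e i, T (En n Z (e i))⟫ : ℂ).re)
    (hμ : ∀ (T : H →L[ℂ] H) (Z : Set Ω), MeasurableSet Z →
      μ T Z = ENNReal.ofReal (∑' i : ι, ⟪e i, T (E Z (e i))⟫ : ℂ).re)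
    (hweak : ∀ T : H →L[ℂ] H, T.IsPositive → (∑' i : ι, ⟪e i, T (e i)⟫) = 1 →
      ∀ f : Ω → ℝ, Continuous f → (∃ M, ∀ x, |f x| ≤ M) →
        Tendsto (fun n => ∫ x, f x ∂(μn T n)) atTop (nhds (∫ x, f x ∂(μ T))))
    (X : Set Ω) (hX : MeasurableSet X) (hfr : E (frontier X) = 0) :
    ∀ φ ψ : H, Tendsto (fun n => ⟪φ, En n X ψ⟫) atTop (nhds ⟪φ, E X ψ⟫) := by
  refine tendsto_inner_of_forall_tendsto_inner_self
    (tendsto_inner_self_of_forall_norm_eq_one fun u hu => ?_)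
  set T := rankOne ℂ u u
  have hu1 : ⟪u, u⟫ = 1 := inner_self_eq_one_of_norm_eq_one hu
  have htrace : ∑' i, ⟪e i, T (e i)⟫ = 1 := by
    simpa only [one_apply_eq_self, hu1] using e.tsum_inner_rankOne_self_apply u 1
  have hμnT : ∀ n Z, MeasurableSet Z → μn T n Z = ENNReal.ofReal ⟪u, En n Z u⟫.re :=
    fun n Z hZ => by
      rw [hμn T n Z hZ, e.tsum_inner_rankOne_self_apply]
  have hμT : ∀ Z, MeasurableSet Z → μ T Z = ENNReal.ofReal ⟪u, E Z u⟫.re := fun Z hZ => by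
    rw [hμ T Z hZ, e.tsum_inner_rankOne_self_apply]
  have hunit : ENNReal.ofReal ⟪u, u⟫.re = 1 := by
    rw [hu1, Complex.one_re, ENNReal.ofReal_one]
  have : ∀ n, IsProbabilityMeasure (μn T n) := fun n =>
    ⟨by rw [hμnT n _ .univ, hEnuniv, one_apply_eq_self, hunit]⟩
  have : IsProbabilityMeasure (μ T) :=
    ⟨by rw [hμT _ .univ, hEuniv, one_apply_eq_self, hunit]⟩
  have hnull : μ T (frontier X) = 0 := by
    simp [hμT _ isClosed_frontier.measurableSet, hfr]
  have hX_lim := tendsto_measure_of_forall_integral_tendsto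
    (hweak T (InnerProductSpace.isPositive_rankOne_self u) htrace) hnull
  simp only [hμnT _ _ hX, hμT _ hX] at hX_lim
  exact ContinuousLinearMap.tendsto_inner_self_of_tendsto_ofReal_re
    (fun n => hEnpos n X hX) (hEpos X hX) u hX_lim

/-- Let `Eⁿ`, `E` be semispectral measures (normalized positive-operator-valued measures)
on the Borel sets of a metric space `Ω`, with values in the bounded operators on a
Hilbert space `H`. If for every state `T` (positive trace-one operator) the probability
measures `Z ↦ Tr[T Eⁿ(Z)]` converge weakly to `Z ↦ Tr[T E(Z)]`, then `Eⁿ(X) → E(X)` in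
the weak operator topology for every Borel `X` with `E(∂X) = 0`. Traces are computed in
a Hilbert basis `e`, and the probability measures are given as measures `μn T n`, `μ T`
agreeing with the corresponding traces on Borel sets. -/
theorem semispectral_weak_convergence
    {Ω : Type*} [MetricSpace Ω] [MeasurableSpace Ω] [BorelSpace Ω]
    {H : Type*} [NormedAddCommGroup H] [InnerProductSpace ℂ H] [CompleteSpace H]
    {ι : Type*} (e : HilbertBasis ι ℂ H)
    (En : ℕ → Set Ω → (H →L[ℂ] H)) (E : Set Ω → (H →L[ℂ] H))
    (hEnpos : ∀ n (Z : Set Ω), MeasurableSet Z → (En n Z).IsPositive)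
    (hEpos : ∀ Z : Set Ω, MeasurableSet Z → (E Z).IsPositive)
    (hEnuniv : ∀ n, En n Set.univ = 1) (hEuniv : E Set.univ = 1)
    (hEnadd : ∀ n (f : ℕ → Set Ω), (∀ k, MeasurableSet (f k)) →
      Pairwise (Function.onFun Disjoint f) → ∀ φ ψ : H,
        HasSum (fun k => ⟪φ, En n (f k) ψ⟫) ⟪φ, En n (⋃ k, f k) ψ⟫)
    (hEadd : ∀ f : ℕ → Set Ω, (∀ k, MeasurableSet (f k)) →
      Pairwise (Function.onFun Disjoint f) → ∀ φ ψ : H,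
        HasSum (fun k => ⟪φ, E (f k) ψ⟫) ⟪φ, E (⋃ k, f k) ψ⟫)
    (μn : (H →L[ℂ] H) → ℕ → Measure Ω) (μ : (H →L[ℂ] H) → Measure Ω)
    (hμn : ∀ (T : H →L[ℂ] H) (n : ℕ) (Z : Set Ω), MeasurableSet Z →
      μn T n Z = ENNReal.ofReal (∑' i : ι, ⟪e i, T (En n Z (e i))⟫ : ℂ).re)
    (hμ : ∀ (T : H →L[ℂ] H) (Z : Set Ω), MeasurableSet Z →
      μ T Z = ENNReal.ofReal (∑' i : ι, ⟪e i, T (E Z (e i))⟫ : ℂ).re)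
    (hweak : ∀ T : H →L[ℂ] H, T.IsPositive → (∑' i : ι, ⟪e i, T (e i)⟫) = 1 →
      ∀ f : Ω → ℝ, Continuous f → (∃ M, ∀ x, |f x| ≤ M) →
        Tendsto (fun n => ∫ x, f x ∂(μn T n)) atTop (nhds (∫ x, f x ∂(μ T))))
    (X : Set Ω) (hX : MeasurableSet X) (hfr : E (frontier X) = 0) :
    ∀ φ ψ : H, Tendsto (fun n => ⟪φ, En n X ψ⟫) atTop (nhds ⟪φ, E X ψ⟫) :=
  semispectral_weak_convergence_general e En E hEnpos hEpos hEnuniv hEuniv μn μ hμn hμ hweak X hX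
    hfr
end
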